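/- Let (V, ν, τ, τ*) be a PN space with τ, τ* sup-continuous and W a linear subspace of V, and let ν̄_{p+W} := sup_{q∈W} ν_{p+q}. Then (V/W, ν̄, τ, τ*) is a PN space (i.e., ν̄_{p+W} = ε₀ implies p ∈ W) if and only if W is closed in the strong topology of (V, ν, τ, τ*). -/

import Mathlib

open Filter Topology Set

/-- A distribution function in `Δ⁺`: nondecreasing, left-continuous,
vanishing on `(-∞,0]` and bounded by `1`. -/
structure DistFun where
  toFun : ℝ → ℝ
  mono' : Monotone toFun
  leftCont' : ∀ x, Filter.Tendsto toFun (nhdsWithin x (Set.Iio x)) (nhds (toFun x))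
  zero' : ∀ x ≤ (0 : ℝ), toFun x = 0
  le_one' : ∀ x, toFun x ≤ 1

instance : CoeFun DistFun (fun _ => ℝ → ℝ) := ⟨DistFun.toFun⟩

/-- Pointwise order on `Δ⁺`. -/
instance : LE DistFun := ⟨fun F G => ∀ x, F.toFun x ≤ G.toFun x⟩

/-- The unit step distribution function `ε_a` for `a ≥ 0`. -/
noncomputable def unitStep (a : ℝ) (_ha : 0 ≤ a) : DistFun where
  toFun x := if x ≤ a then 0 else 1
  mono' := by
    intro x y hxy
    by_cases hx : x ≤ a <;> by_cases hy : y ≤ a <;> simp [hx, hy] <;> linarith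
  leftCont' := by
    intro x
    by_cases hx : x ≤ a
    · have h : (fun y => if y ≤ a then (0:ℝ) else 1) =ᶠ[nhdsWithin x (Set.Iio x)]
          fun _ => (0:ℝ) := by
        filter_upwards [self_mem_nhdsWithin] with y hy
        exact if_pos ((le_of_lt hy).trans hx)
      simpa [if_pos hx] using (tendsto_const_nhds (α := ℝ)).congr' h.symm
    · have hax : a < x := lt_of_not_ge hx
      have h : (fun y => if y ≤ a then (0:ℝ) else 1) =ᶠ[nhdsWithin x (Set.Iio x)]
          fun _ => (1:ℝ) := by
        filter_upwards [(eventually_gt_nhds hax).filter_mono nhdsWithin_le_nhds] with y hy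
        exact if_neg (not_le.mpr hy)
      simpa [if_neg hx] using (tendsto_const_nhds (α := ℝ)).congr' h.symm
  zero' := fun x hx => if_pos (hx.trans _ha)
  le_one' := by intro x; by_cases h : x ≤ a <;> simp [h]

/-- The maximal element `ε₀` of `Δ⁺`. -/
noncomputable def eps0 : DistFun := unitStep 0 le_rfl

/-- The one-sided Lévy condition `(F,G;h)`. -/
def levyCond (F G : DistFun) (h : ℝ) : Prop :=
  ∀ x : ℝ, -(1/h) < x → x < 1/h →
    F.toFun (x - h) - h ≤ G.toFun x ∧ G.toFun x ≤ F.toFun (x + h) + h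

/-- The Sibley (modified Lévy) metric on `Δ⁺`. -/
noncomputable def sibley (F G : DistFun) : ℝ :=
  sInf {h : ℝ | 0 < h ∧ h ≤ 1 ∧ levyCond F G h ∧ levyCond G F h}

/-- Triangle function: associative, commutative, nondecreasing binary
operation on `Δ⁺` with identity `ε₀`. -/
structure IsTriangleFun (τ : DistFun → DistFun → DistFun) : Prop where
  comm : ∀ F G, τ F G = τ G F
  assoc : ∀ F G H, τ (τ F G) H = τ F (τ G H)
  mono : ∀ F G H, F ≤ G → τ F H ≤ τ G H
  ident : ∀ F, τ F eps0 = F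

/-- Continuity of a triangle function w.r.t. the Sibley metric (sequential form). -/
def TriCont (τ : DistFun → DistFun → DistFun) : Prop :=
  ∀ (F G : ℕ → DistFun) (F₀ G₀ : DistFun),
    Filter.Tendsto (fun n => sibley (F n) F₀) Filter.atTop (nhds 0) →
    Filter.Tendsto (fun n => sibley (G n) G₀) Filter.atTop (nhds 0) →
    Filter.Tendsto (fun n => sibley (τ (F n) (G n)) (τ F₀ G₀)) Filter.atTop (nhds 0)

/-- Sup-continuity of a triangle function: `τ (sup_i F_i) G = sup_i τ (F_i) G`
(pointwise). -/
def SupCont (τ : DistFun → DistFun → DistFun) : Prop :=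
  ∀ {ι : Type} [Nonempty ι] (F : ι → DistFun) (S G : DistFun),
    (∀ x, S.toFun x = ⨆ i, (F i).toFun x) →
    ∀ x, (τ S G).toFun x = ⨆ i, (τ (F i) G).toFun x

/-- Domination `τ₁ ≫ τ₂` of triangle functions. -/
def Dominates (τ₁ τ₂ : DistFun → DistFun → DistFun) : Prop :=
  ∀ F₁ F₂ G₁ G₂, τ₂ (τ₁ F₁ F₂) (τ₁ G₁ G₂) ≤ τ₁ (τ₂ F₁ G₁) (τ₂ F₂ G₂)

/-- A probabilistic pseudo-normed space `(V, ν, τ, τ*)`. -/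
structure IsPPNSpace {V : Type*} [AddCommGroup V] [Module ℝ V]
    (ν : V → DistFun) (τ τs : DistFun → DistFun → DistFun) : Prop where
  tri : IsTriangleFun τ
  tri_s : IsTriangleFun τs
  cont : TriCont τ
  cont_s : TriCont τs
  tau_le : ∀ F G, τ F G ≤ τs F G
  N1' : ν 0 = eps0
  N2 : ∀ p, ν (-p) = ν p
  N3 : ∀ p q, τ (ν p) (ν q) ≤ ν (p + q)
  N4 : ∀ (p : V) (α : ℝ), 0 ≤ α → α ≤ 1 →
    ν p ≤ τs (ν (α • p)) (ν ((1 - α) • p))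

/-- A probabilistic normed space `(V, ν, τ, τ*)`. -/
structure IsPNSpace {V : Type*} [AddCommGroup V] [Module ℝ V]
    (ν : V → DistFun) (τ τs : DistFun → DistFun → DistFun)
    extends IsPPNSpace ν τ τs : Prop where
  N1 : ∀ p, ν p = eps0 ↔ p = 0

/-- The strong topology of a PN space, generated by the strong neighbourhoods
`N_p(t) = {q : ν_{q-p}(t) > 1 - t}`. -/
def strongTop {V : Type*} [AddCommGroup V] (ν : V → DistFun) : TopologicalSpace V :=
  TopologicalSpace.generateFrom
    {S | ∃ (p : V) (t : ℝ), 0 < t ∧ S = {q | 1 - t < (ν (q - p)).toFun t}}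

/-- A set is closed in the strong topology. -/
def StrongClosed {V : Type*} [AddCommGroup V] (ν : V → DistFun) (S : Set V) : Prop :=
  @IsClosed V (strongTop ν) S

/-- A strong Cauchy sequence. -/
def StrongCauchy {V : Type*} [AddCommGroup V] (ν : V → DistFun) (p : ℕ → V) : Prop :=
  ∀ t : ℝ, 0 < t → ∃ N : ℕ, ∀ m n, N ≤ m → N ≤ n → 1 - t < (ν (p n - p m)).toFun t

/-- Strong convergence of a sequence to a point. -/
def StrongConv {V : Type*} [AddCommGroup V] (ν : V → DistFun) (p : ℕ → V) (x : V) : Prop :=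
  ∀ t : ℝ, 0 < t → ∃ N : ℕ, ∀ n, N ≤ n → 1 - t < (ν (p n - x)).toFun t

/-- Strong completeness. -/
def StrongComplete {V : Type*} [AddCommGroup V] (ν : V → DistFun) : Prop :=
  ∀ p : ℕ → V, StrongCauchy ν p → ∃ x, StrongConv ν p x

/-! The quotient `ν̄` inherits the PPN axioms from `ν` (for (N3) through the
sup-continuity of `τ`), so only (N1) is at stake. Now `ν̄_{p+W} = ε₀` says exactly that every
strong neighbourhood `N_p(t)` meets `W`. The sets `N_p(t)` are open and contain `p`, while a
sequence `q_n` with `ν_{q_n - p} → ε₀` converges to `p` in the strong topology, because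
`ν_{q_n - p₀} ≥ τ(ν_{q_n - p}, ν_{p - p₀}) → ν_{p - p₀}` by continuity of `τ`. Hence that
condition on `p` is membership in the strong closure of `W`. -/

instance : PartialOrder DistFun where
  le := (· ≤ ·)
  le_refl _ _ := le_rfl
  le_trans _ _ _ hFG hGH x := (hFG x).trans (hGH x)
  le_antisymm F G hFG hGF := by
    cases F; cases G; congr; funext x; exact le_antisymm (hFG x) (hGF x)

namespace DistFun

@[ext]
theorem ext {F G : DistFun} (h : ∀ x, F x = G x) : F = G :=
  le_antisymm (fun x => (h x).le) (fun x => (h x).ge)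

theorem nonneg (F : DistFun) (x : ℝ) : 0 ≤ F x :=
  (F.zero' (min x 0) (min_le_right _ _)).symm.le.trans (F.mono' (min_le_left _ _))

theorem bddAbove_range_apply {ι : Sort*} (F : ι → DistFun) (x : ℝ) :
    BddAbove (range fun i => F i x) :=
  ⟨1, by rintro _ ⟨i, rfl⟩; exact (F i).le_one' x⟩

end DistFun

theorem eps0_apply (x : ℝ) : eps0 x = if x ≤ 0 then 0 else 1 := rfl

theorem eps0_apply_of_pos {x : ℝ} (hx : 0 < x) : eps0 x = 1 := if_neg hx.not_ge

theorem DistFun.eq_eps0_iff {F : DistFun} : F = eps0 ↔ ∀ t, 0 < t → 1 - t < F t := by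
  refine ⟨by rintro rfl t ht; rw [eps0_apply_of_pos ht]; linarith, fun hF => ?_⟩
  ext x
  rcases le_or_gt x 0 with hx | hx
  · rw [F.zero' x hx, eps0_apply, if_pos hx]
  rw [eps0_apply_of_pos hx]
  refine le_antisymm (F.le_one' x) (le_iff_forall_pos_lt_add.2 fun ε hε => ?_)
  have hmin : 1 - min ε x < F (min ε x) := hF _ (lt_min hε hx)
  linarith [F.mono' (min_le_right ε x), min_le_left ε x]

theorem levyCond_self (F : DistFun) {h : ℝ} (h0 : 0 < h) : levyCond F F h := fun x _ _ =>
  ⟨by linarith [F.mono' (show x - h ≤ x by linarith)],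
    by linarith [F.mono' (show x ≤ x + h by linarith)]⟩

theorem levyCond_one (F G : DistFun) : levyCond F G 1 := fun x _ hx =>
  ⟨by rw [F.zero' _ (by linarith)]; linarith [G.nonneg x],
    by linarith [G.le_one' x, F.nonneg (x + 1)]⟩

theorem sibley_nonneg (F G : DistFun) : 0 ≤ sibley F G :=
  Real.sInf_nonneg fun _ hh => hh.1.le

theorem sibley_le {F G : DistFun} {h : ℝ} (h0 : 0 < h) (h1 : h ≤ 1) (hFG : levyCond F G h)
    (hGF : levyCond G F h) : sibley F G ≤ h :=
  csInf_le ⟨0, fun _ hh => hh.1.le⟩ ⟨h0, h1, hFG, hGF⟩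

theorem exists_levyCond_of_sibley_lt {F G : DistFun} {δ : ℝ} (hδ : sibley F G < δ) :
    ∃ h, 0 < h ∧ h < δ ∧ levyCond F G h ∧ levyCond G F h := by
  obtain ⟨h, ⟨h0, -, hFG, hGF⟩, hhδ⟩ :=
    exists_lt_of_csInf_lt (s := {h | 0 < h ∧ h ≤ 1 ∧ levyCond F G h ∧ levyCond G F h})
      ⟨1, one_pos, le_rfl, levyCond_one F G, levyCond_one G F⟩ hδ
  exact ⟨h, h0, hhδ, hFG, hGF⟩

theorem sibley_self (F : DistFun) : sibley F F = 0 :=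
  le_antisymm (le_of_forall_gt_imp_ge_of_dense fun _ hε =>
      (sibley_le (lt_min hε one_pos) (min_le_right _ _) (levyCond_self F (lt_min hε one_pos))
        (levyCond_self F (lt_min hε one_pos))).trans (min_le_left _ _))
    (sibley_nonneg F F)

theorem sibley_eps0_le {F : DistFun} {t : ℝ} (ht : 0 < t) (ht1 : t ≤ 1) (hFt : 1 - t < F t) :
    sibley F eps0 ≤ t := by
  refine sibley_le ht ht1 (fun x _ _ => ⟨?_, ?_⟩) (fun x _ _ => ⟨?_, ?_⟩) <;>
    simp only [eps0_apply] <;> split_ifs with hx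
  all_goals first
    | linarith [F.nonneg x, F.nonneg (x + t), F.le_one' x, F.le_one' (x - t)]
    | rw [F.zero' _ (by linarith)]; linarith
    | linarith [F.mono' (show t ≤ x + t by linarith)]
    | linarith [F.mono' (show t ≤ x by linarith)]

theorem eventually_lt_apply_of_tendsto_sibley {ι : Type*} {l : Filter ι} {H : ι → DistFun}
    {F : DistFun} (hH : Tendsto (fun i => sibley (H i) F) l (𝓝 0)) {t : ℝ} (ht : 0 < t)
    (hFt : 1 - t < F t) : ∀ᶠ i in l, 1 - t < H i t := by
  set ε := (F t - (1 - t)) / 2 with hε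
  -- by left-continuity at `t`, the shift by `h` in the Lévy condition costs less than `ε`
  obtain ⟨a, hat, ha⟩ : ∃ a < t, Ioo a t ⊆ {y | F t - ε < F y} :=
    mem_nhdsLT_iff_exists_Ioo_subset.1 <|
      (F.leftCont' t).eventually (eventually_gt_nhds (by linarith))
  have hδ : 0 < min (min ε (t - a)) (1 / t) :=
    lt_min (lt_min (by linarith) (by linarith)) (one_div_pos.2 ht)
  filter_upwards [hH.eventually (eventually_lt_nhds hδ)] with i hi
  obtain ⟨h, h0, hhδ, -, hFH⟩ := exists_levyCond_of_sibley_lt hi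
  simp only [lt_min_iff] at hhδ
  have hlevy := (hFH t (by linarith [one_div_pos.2 h0]) ((lt_one_div ht h0).2 hhδ.2)).1
  have hleft : F t - ε < F (t - h) := ha ⟨by linarith, by linarith⟩
  linarith

section StrongTopology

variable {V : Type*} [AddCommGroup V]

def strongNbhd (ν : V → DistFun) (p : V) (t : ℝ) : Set V :=
  {q | 1 - t < (ν (q - p)).toFun t}

theorem isOpen_strongNbhd (ν : V → DistFun) (p : V) {t : ℝ} (ht : 0 < t) :
    IsOpen[strongTop ν] (strongNbhd ν p t) :=
  TopologicalSpace.isOpen_generateFrom_of_mem ⟨p, t, ht, rfl⟩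

theorem mem_strongNbhd_self {ν : V → DistFun} (h0 : ν 0 = eps0) (p : V) {t : ℝ} (ht : 0 < t) :
    p ∈ strongNbhd ν p t := by
  show 1 - t < (ν (p - p)).toFun t
  rw [sub_self, h0, eps0_apply_of_pos ht]
  linarith

variable [Module ℝ V] {ν : V → DistFun} {τ τs : DistFun → DistFun → DistFun}

theorem tendsto_strongTop (h : IsPPNSpace ν τ τs) {q : ℕ → V} {p : V}
    (hq : Tendsto (fun n => sibley (ν (q n - p)) eps0) atTop (𝓝 0)) :
    Tendsto q atTop (@nhds V (strongTop ν) p) := by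
  rw [strongTop, TopologicalSpace.nhds_generateFrom]
  simp only [tendsto_iInf, tendsto_principal]
  rintro _ ⟨hp, p₀, t, ht, rfl⟩
  have hτ := h.cont _ (fun _ => ν (p - p₀)) eps0 (ν (p - p₀)) hq
    (by simp only [sibley_self, tendsto_const_nhds])
  rw [h.tri.comm, h.tri.ident] at hτ
  filter_upwards [eventually_lt_apply_of_tendsto_sibley hτ ht hp] with n hn
  calc 1 - t < (τ (ν (q n - p)) (ν (p - p₀))).toFun t := hn
    _ ≤ (ν (q n - p + (p - p₀))).toFun t := h.N3 _ _ t
    _ = (ν (q n - p₀)).toFun t := by rw [sub_add_sub_cancel]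

theorem strongClosed_iff (h : IsPPNSpace ν τ τs) {S : Set V} :
    StrongClosed ν S ↔ ∀ p, (∀ t, 0 < t → (strongNbhd ν p t ∩ S).Nonempty) → p ∈ S := by
  let _ : TopologicalSpace V := strongTop ν
  constructor
  · intro hS p hp
    choose q hq using fun n : ℕ => hp (1 / (n + 1)) Nat.one_div_pos_of_nat
    refine hS.mem_of_tendsto (tendsto_strongTop h ?_) (Eventually.of_forall fun n => (hq n).2)
    refine squeeze_zero (fun n => sibley_nonneg _ _) (fun n => sibley_eps0_le
      Nat.one_div_pos_of_nat ?_ (hq n).1) tendsto_one_div_add_atTop_nhds_zero_nat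
    simpa using Nat.one_div_le_one_div (α := ℝ) n.zero_le
  · intro hS
    refine isOpen_compl_iff.1 (isOpen_iff_forall_mem_open.2 fun p hp => ?_)
    obtain ⟨t, ht, hdisj⟩ : ∃ t, 0 < t ∧ strongNbhd ν p t ∩ S = ∅ := by
      by_contra! hne
      exact hp (hS p hne)
    exact ⟨strongNbhd ν p t, fun q hq hqS => hdisj.subset ⟨hq, hqS⟩,
      isOpen_strongNbhd ν p ht, mem_strongNbhd_self h.N1' p ht⟩

end StrongTopology

theorem isPNSpace_iff {V : Type*} [AddCommGroup V] [Module ℝ V] {ν : V → DistFun}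
    {τ τs : DistFun → DistFun → DistFun} (h : IsPPNSpace ν τ τs) :
    IsPNSpace ν τ τs ↔ ∀ p, ν p = eps0 → p = 0 :=
  ⟨fun hPN p => (hPN.N1 p).1, fun hN1 => ⟨h, fun p => ⟨hN1 p, fun hp => hp ▸ h.N1'⟩⟩⟩

theorem IsTriangleFun.mono₂ {τ : DistFun → DistFun → DistFun} (hτ : IsTriangleFun τ)
    {F F' G G' : DistFun} (hF : F ≤ F') (hG : G ≤ G') : τ F G ≤ τ F' G' :=
  calc τ F G ≤ τ F' G := hτ.mono _ _ _ hF
    _ = τ G F' := hτ.comm _ _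
    _ ≤ τ G' F' := hτ.mono _ _ _ hG
    _ = τ F' G' := hτ.comm _ _

theorem SupCont.le_of_forall_le {τ : DistFun → DistFun → DistFun} (hτ : SupCont τ)
    {ι : Sort*} [Nonempty ι] {F : ι → DistFun} {S G H : DistFun} (hS : ∀ x, S x = ⨆ i, F i x)
    (hle : ∀ i, τ (F i) G ≤ H) : τ S G ≤ H := by
  -- `SupCont` only allows index types in `Type`; reindexing by `range F` lifts that restriction.
  have hS' : ∀ x, S x = ⨆ R : range F, R.1 x :=
    fun x => (hS x).trans (iSup_range' (fun R : DistFun => R x) F).symm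
  have : Nonempty (range F) := (range_nonempty F).to_subtype
  intro x
  rw [hτ (fun R : range F => R.1) S G hS' x]
  exact ciSup_le fun ⟨_, i, hi⟩ => hi ▸ hle i x

section Quotient

variable {V : Type*} [AddCommGroup V] [Module ℝ V]

def IsQuotientNorm (ν : V → DistFun) (W : Submodule ℝ V) (ν' : V ⧸ W → DistFun) : Prop :=
  ∀ (p : V) (x : ℝ), (ν' (W.mkQ p)).toFun x = ⨆ q : W, (ν (p + (q : V))).toFun x

variable {W : Submodule ℝ V} {ν : V → DistFun} {ν' : V ⧸ W → DistFun}
  {τ τs : DistFun → DistFun → DistFun}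

namespace IsQuotientNorm

theorem le_mkQ (hν' : IsQuotientNorm ν W ν') (p : V) (q : W) : ν (p + q) ≤ ν' (W.mkQ p) :=
  fun x => (hν' p x).symm ▸ le_ciSup (DistFun.bddAbove_range_apply (fun q : W => ν (p + q)) x) q

theorem mkQ_le (hν' : IsQuotientNorm ν W ν') {p : V} {G : DistFun}
    (hle : ∀ q : W, ν (p + q) ≤ G) : ν' (W.mkQ p) ≤ G :=
  fun x => (hν' p x).trans_le (ciSup_le fun q => hle q x)

theorem eq_eps0_iff (hν' : IsQuotientNorm ν W ν') (hN2 : ∀ p, ν (-p) = ν p) (p : V) :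
    ν' (W.mkQ p) = eps0 ↔ ∀ t, 0 < t → (strongNbhd ν p t ∩ W).Nonempty := by
  rw [DistFun.eq_eps0_iff]
  refine forall₂_congr fun t _ => ?_
  rw [hν', lt_ciSup_iff (DistFun.bddAbove_range_apply _ t)]
  constructor
  · rintro ⟨q, hq⟩
    refine ⟨-q, ?_, W.neg_mem q.2⟩
    show 1 - t < (ν (-q - p)).toFun t
    rwa [← neg_add', hN2, add_comm]
  · rintro ⟨q, hq, hqW⟩
    refine ⟨-⟨q, hqW⟩, ?_⟩
    show 1 - t < (ν (p + -q)).toFun t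
    rwa [← sub_eq_add_neg, ← neg_sub q p, hN2]

theorem map_zero (hν' : IsQuotientNorm ν W ν') (h : IsPPNSpace ν τ τs) : ν' 0 = eps0 := by
  rw [← W.mkQ.map_zero, hν'.eq_eps0_iff h.N2]
  exact fun t ht => ⟨0, mem_strongNbhd_self h.N1' 0 ht, W.zero_mem⟩

theorem map_neg (hν' : IsQuotientNorm ν W ν') (hN2 : ∀ p, ν (-p) = ν p) (P : V ⧸ W) :
    ν' (-P) = ν' P := by
  have hle : ∀ p, ν' (W.mkQ (-p)) ≤ ν' (W.mkQ p) := fun p =>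
    hν'.mkQ_le fun q => by
      rw [← hN2, neg_add, neg_neg, ← Submodule.coe_neg]
      exact hν'.le_mkQ p (-q)
  obtain ⟨p, rfl⟩ := W.mkQ_surjective P
  rw [← LinearMap.map_neg]
  exact le_antisymm (hle p) (by simpa using hle (-p))

theorem tau_le_map_add (hν' : IsQuotientNorm ν W ν') (h : IsPPNSpace ν τ τs) (hτ : SupCont τ)
    (P Q : V ⧸ W) : τ (ν' P) (ν' Q) ≤ ν' (P + Q) := by
  obtain ⟨p, rfl⟩ := W.mkQ_surjective P
  obtain ⟨p', rfl⟩ := W.mkQ_surjective Q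
  refine hτ.le_of_forall_le (hν' p) fun q => ?_
  rw [h.tri.comm]
  refine hτ.le_of_forall_le (hν' p') fun q' => ?_
  calc τ (ν (p' + q')) (ν (p + q)) ≤ ν (p' + q' + (p + q)) := h.N3 _ _
    _ = ν (p + p' + ↑(q + q')) := by push_cast; abel_nf
    _ ≤ ν' (W.mkQ p + W.mkQ p') := (W.mkQ.map_add p p').symm ▸ hν'.le_mkQ _ _

theorem le_tauS_map_smul (hν' : IsQuotientNorm ν W ν') (h : IsPPNSpace ν τ τs) (P : V ⧸ W)
    (α : ℝ) (h0 : 0 ≤ α) (h1 : α ≤ 1) : ν' P ≤ τs (ν' (α • P)) (ν' ((1 - α) • P)) := by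
  obtain ⟨p, rfl⟩ := W.mkQ_surjective P
  rw [← map_smul, ← map_smul]
  refine hν'.mkQ_le fun q => (h.N4 _ α h0 h1).trans (h.tri_s.mono₂ ?_ ?_)
  · simpa only [smul_add, Submodule.coe_smul] using hν'.le_mkQ (α • p) (α • q)
  · simpa only [smul_add, Submodule.coe_smul] using hν'.le_mkQ ((1 - α) • p) ((1 - α) • q)

theorem isPPNSpace (hν' : IsQuotientNorm ν W ν') (h : IsPPNSpace ν τ τs) (hτ : SupCont τ) :
    IsPPNSpace ν' τ τs :=
  ⟨h.tri, h.tri_s, h.cont, h.cont_s, h.tau_le, hν'.map_zero h, hν'.map_neg h.N2,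
    hν'.tau_le_map_add h hτ, hν'.le_tauS_map_smul h⟩

end IsQuotientNorm

end Quotient

theorem quotient_PN_iff_closed_general {V : Type*} [AddCommGroup V] [Module ℝ V]
    (ν : V → DistFun) (τ τs : DistFun → DistFun → DistFun)
    (h : IsPNSpace ν τ τs) (hτ : SupCont τ)
    (W : Submodule ℝ V)
    (ν' : V ⧸ W → DistFun)
    (hν' : ∀ (p : V) (x : ℝ),
      (ν' (W.mkQ p)).toFun x = ⨆ q : W, (ν (p + (q : V))).toFun x) :
    IsPNSpace ν' τ τs ↔ StrongClosed ν (W : Set V) := by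
  have hquot : IsQuotientNorm ν W ν' := hν'
  rw [isPNSpace_iff (hquot.isPPNSpace h.toIsPPNSpace hτ), strongClosed_iff h.toIsPPNSpace,
    W.mkQ_surjective.forall]
  refine forall_congr' fun p => ?_
  rw [hquot.eq_eps0_iff h.N2, Submodule.mkQ_apply, Submodule.Quotient.mk_eq_zero,
    SetLike.mem_coe]

theorem quotient_PN_iff_closed {V : Type*} [AddCommGroup V] [Module ℝ V]
    (ν : V → DistFun) (τ τs : DistFun → DistFun → DistFun)
    (h : IsPNSpace ν τ τs) (hτ : SupCont τ) (hτs : SupCont τs)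
    (W : Submodule ℝ V)
    (ν' : V ⧸ W → DistFun)
    (hν' : ∀ (p : V) (x : ℝ),
      (ν' (W.mkQ p)).toFun x = ⨆ q : W, (ν (p + (q : V))).toFun x) :
    IsPNSpace ν' τ τs ↔ StrongClosed ν (W : Set V) :=
  quotient_PN_iff_closed_general ν τ τs h hτ W ν' hν'
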